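/- Every torsion-free, virtually nilpotent group which is commutative transitive is abelian. -/

import Mathlib

/-!
A nontrivial element `z` of the center of the nilpotent finite-index subgroup `H` commutes with
every `a ≠ 1`: in a torsion-free group some power `a ^ n ≠ 1` lies in `H`, and `a` commutes with
`a ^ n`, which commutes with `z`. Transitivity through `z` then makes any two elements commute.
-/

/-- A monoid is torsion-free if no element other than `1` has finite order
(the definition of `Monoid.IsTorsionFree` in Mathlib of December 2024, since removed). -/
def Monoid.IsTorsionFree (G : Type*) [Monoid G] : Prop :=
  ∀ g : G, g ≠ 1 → ¬IsOfFinOrder g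

def IsCommTransitive (G : Type*) [Group G] : Prop :=
  ∀ a b c : G, a ≠ 1 → b ≠ 1 → c ≠ 1 → Commute a b → Commute b c → Commute a c

lemma Monoid.IsTorsionFree.exists_pow_mem_ne_one {G : Type*} [Group G]
    (htf : Monoid.IsTorsionFree G) {H : Subgroup G} (hH : H.FiniteIndex) {a : G} (ha : a ≠ 1) :
    ∃ n : ℕ, a ^ n ∈ H ∧ a ^ n ≠ 1 := by
  obtain ⟨n, hn, -, han⟩ := H.exists_pow_mem_of_index_ne_zero hH.index_ne_zero a
  exact ⟨n, han, fun h => htf a ha (isOfFinOrder_iff_pow_eq_one.2 ⟨n, hn, h⟩)⟩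

lemma Subgroup.exists_ne_one_mem_centralizer_of_isNilpotent {G : Type*} [Group G]
    (H : Subgroup G) [Group.IsNilpotent H] [Nontrivial H] :
    ∃ z ∈ Subgroup.centralizer (H : Set G), z ≠ 1 := by
  obtain ⟨z, hz1⟩ := Subgroup.ne_bot_iff_exists_ne_one.1 (Group.IsNilpotent.center_ne_bot (G := H))
  refine ⟨z.1.1, Subgroup.mem_centralizer_iff.2 fun h hh => ?_, fun h => hz1 (by ext; exact h)⟩
  exact congrArg Subtype.val (Subgroup.mem_center_iff.1 z.2 ⟨h, hh⟩)

namespace IsCommTransitive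

variable {G : Type*} [Group G]

lemma commute_of_commute_pow (hG : IsCommTransitive G) {a z : G} {n : ℕ} (ha : a ≠ 1)
    (han : a ^ n ≠ 1) (hz : z ≠ 1) (h : Commute (a ^ n) z) : Commute a z :=
  hG a (a ^ n) z ha han hz ((Commute.refl a).pow_right n) h

lemma commute_of_mem_centralizer (hG : IsCommTransitive G) (htf : Monoid.IsTorsionFree G)
    {H : Subgroup G} (hH : H.FiniteIndex) {z : G} (hzH : z ∈ Subgroup.centralizer (H : Set G))
    (hz : z ≠ 1) (a : G) : Commute a z := by
  rcases eq_or_ne a 1 with rfl | ha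
  · exact Commute.one_left z
  obtain ⟨n, han, han1⟩ := htf.exists_pow_mem_ne_one hH ha
  exact hG.commute_of_commute_pow ha han1 hz (Subgroup.mem_centralizer_iff.1 hzH _ han)

lemma commute_of_forall_commute (hG : IsCommTransitive G) {z : G} (hz : z ≠ 1)
    (h : ∀ a, Commute a z) (a b : G) : Commute a b := by
  rcases eq_or_ne a 1 with rfl | ha
  · exact Commute.one_left b
  rcases eq_or_ne b 1 with rfl | hb
  · exact Commute.one_right a
  exact hG a z b ha hz hb (h a) (h b).symm

end IsCommTransitive

theorem ct_virtually_nilpotent_abelian (G : Type*) [Group G]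
    (htf : Monoid.IsTorsionFree G)
    (hvn : ∃ H : Subgroup G, H.FiniteIndex ∧ Group.IsNilpotent H)
    (hCT : ∀ a b c : G, a ≠ 1 → b ≠ 1 → c ≠ 1 →
      Commute a b → Commute b c → Commute a c) :
    ∀ a b : G, a * b = b * a := by
  intro a b
  rcases eq_or_ne a 1 with rfl | ha
  · simp
  obtain ⟨H, hH, hnil⟩ := hvn
  obtain ⟨n, han, han1⟩ := htf.exists_pow_mem_ne_one hH ha
  have : Nontrivial H := H.nontrivial_iff_exists_ne_one.2 ⟨a ^ n, han, han1⟩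
  obtain ⟨z, hzH, hz⟩ := H.exists_ne_one_mem_centralizer_of_isNilpotent
  have hCT' : IsCommTransitive G := hCT
  exact hCT'.commute_of_forall_commute hz (hCT'.commute_of_mem_centralizer htf hH hzH hz) a b
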